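/- arXiv:2605.21296 — 3 statements merged into one kernel-verified Lean document; each statement's English description precedes it below -/
import Mathlib

section
/- For m > 2, the function F(m) = log(m−2) − log(m−1) − log(1 − 1/((π²+1)(m−1))) + log(π²+1)/(m−2) is strictly positive; equivalently, (m−2)/(m−1) > (1 − 1/((π²+1)(m−1))) · (1/(π²+1))^{1/(m−2)} for all m > 2. -/
/-! With `t = 1/(m-2)`, the estimate `a ^ t = exp (t log a) > 1 + t log a ≥ 1 + t (1 - 1/a)` holds
for every `a > 1`, and dividing `1 - 1/(a(m-1))` by the right-hand side gives exactly `(m-2)/(m-1)`. -/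

open Real

lemma one_add_mul_one_sub_inv_lt_rpow {a t : ℝ} (ha : 1 < a) (ht : 0 < t) :
    1 + t * (1 - a⁻¹) < a ^ t := by
  have ha₀ : 0 < a := by linarith
  calc 1 + t * (1 - a⁻¹) ≤ t * log a + 1 := by
        nlinarith [one_sub_inv_le_log_of_pos ha₀]
    _ < exp (t * log a) := add_one_lt_exp (by positivity [log_pos ha])
    _ = a ^ t := by rw [rpow_def_of_pos ha₀, mul_comm]

lemma one_add_div_mul_one_sub_inv_pos {a m : ℝ} (ha : 1 < a) (hm : 2 < m) :
    0 < 1 + 1 / (m - 2) * (1 - a⁻¹) := by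
  have : 0 < m - 2 := by linarith
  have : 0 < 1 - a⁻¹ := sub_pos.mpr (inv_lt_one_of_one_lt₀ ha)
  positivity

lemma one_sub_inv_div_one_add_eq {a m : ℝ} (ha : 1 < a) (hm : 2 < m) :
    (1 - 1 / (a * (m - 1))) / (1 + 1 / (m - 2) * (1 - a⁻¹)) = (m - 2) / (m - 1) := by
  have h₁ : m - 1 ≠ 0 := by linarith
  have h₂ : m - 2 ≠ 0 := by linarith
  have h₃ : a ≠ 0 := by linarith
  rw [div_eq_iff (one_add_div_mul_one_sub_inv_pos ha hm).ne']
  field_simp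
  ring

theorem one_sub_inv_mul_inv_rpow_lt {a m : ℝ} (ha : 1 < a) (hm : 2 < m) :
    (1 - 1 / (a * (m - 1))) * (1 / a) ^ (1 / (m - 2)) < (m - 2) / (m - 1) := by
  have ht : 0 < 1 / (m - 2) := by simp only [one_div, inv_pos]; linarith
  have hc : 0 < 1 - 1 / (a * (m - 1)) := by
    rw [sub_pos, div_lt_one (by nlinarith)]; nlinarith
  rw [one_div a, inv_rpow (by linarith), ← div_eq_mul_inv, ← one_sub_inv_div_one_add_eq ha hm]
  exact div_lt_div_of_pos_left hc (one_add_div_mul_one_sub_inv_pos ha hm)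
    (one_add_mul_one_sub_inv_lt_rpow ha ht)

theorem stmt_4 (m : ℝ) (hm : 2 < m) :
    (1 - 1 / ((Real.pi ^ 2 + 1) * (m - 1))) * (1 / (Real.pi ^ 2 + 1)) ^ (1 / (m - 2))
      < (m - 2) / (m - 1) :=
  one_sub_inv_mul_inv_rpow_lt (lt_add_of_pos_left 1 (pow_pos pi_pos 2)) hm
end

section
/- For m > 2, the function F(m) = log(m−2) − log(m−1) − log(1 − 1/((π²+1)(m−1))) + log(π²+1)/(m−2) has derivative F'(m) = −log(π²+1)/(m−2)² + π²/((m−2)((π²+1)m − (π²+2))), and F'(m) < 0 for all m > 2. -/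
noncomputable def F (m : ℝ) : ℝ :=
  Real.log (m - 2) - Real.log (m - 1) - Real.log (1 - 1 / ((Real.pi ^ 2 + 1) * (m - 1)))
    + Real.log (Real.pi ^ 2 + 1) / (m - 2)

/-!
Replace `π² + 1` by an arbitrary `a > 1`. Differentiating term by term and clearing
denominators gives `F'(m) = -log a / (m - 2)² + (a - 1) / ((m - 2)(a m - (a + 1)))`.
Its sign reduces to `(a - 1)(m - 2) < log a · (a m - (a + 1))`, which follows from
`log a ≥ 1 - a⁻¹`: then `log a · (a m - (a + 1)) ≥ (a - 1)(m - 1) - (a - 1)/a`, and `1/a < 1`.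
-/

open Real

noncomputable def paramF (a m : ℝ) : ℝ :=
  log (m - 2) - log (m - 1) - log (1 - 1 / (a * (m - 1))) + log a / (m - 2)

lemma F_eq_paramF : F = paramF (π ^ 2 + 1) := rfl

section
variable {a m : ℝ}

lemma hasDerivAt_log_one_sub_one_div_mul (ha : 1 < a) (hm : 2 < m) :
    HasDerivAt (fun x => log (1 - 1 / (a * (x - 1)))) (1 / ((m - 1) * (a * m - (a + 1)))) m := by
  have hq : 0 < a * m - (a + 1) := by nlinarith
  have hlin : HasDerivAt (fun x => a * (x - 1)) a m := by
    simpa using ((hasDerivAt_id' m).sub_const 1).const_mul a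
  have hinner : HasDerivAt (fun x => 1 - 1 / (a * (x - 1))) (a / (a * (m - 1)) ^ 2) m := by
    have h := (hlin.inv (by nlinarith)).const_sub 1
    rw [neg_div, neg_neg] at h
    exact h.congr_of_eventuallyEq (.of_forall fun x => by simp [one_div])
  have hfrac : 1 - 1 / (a * (m - 1)) = (a * m - (a + 1)) / (a * (m - 1)) := by
    field_simp [show m - 1 ≠ 0 by linarith, show a ≠ 0 by linarith]; ring
  convert hinner.log (by rw [hfrac]; exact (div_pos hq (by nlinarith)).ne') using 1
  rw [hfrac]
  field_simp [show m - 1 ≠ 0 by linarith, show a ≠ 0 by linarith, hq.ne']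

lemma hasDerivAt_paramF (ha : 1 < a) (hm : 2 < m) :
    HasDerivAt (paramF a)
      (-log a / (m - 2) ^ 2 + (a - 1) / ((m - 2) * (a * m - (a + 1)))) m := by
  have h2 : HasDerivAt (fun x => log (x - 2)) (1 / (m - 2)) m := by
    simpa using ((hasDerivAt_id' m).sub_const 2).log (by linarith)
  have h1 : HasDerivAt (fun x => log (x - 1)) (1 / (m - 1)) m := by
    simpa using ((hasDerivAt_id' m).sub_const 1).log (by linarith)
  have hrec : HasDerivAt (fun x => log a / (x - 2)) (-log a / (m - 2) ^ 2) m := by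
    simpa [Pi.div_def] using
      (hasDerivAt_const m (log a)).div ((hasDerivAt_id' m).sub_const 2) (by linarith)
  refine (((h2.sub h1).sub (hasDerivAt_log_one_sub_one_div_mul ha hm)).add hrec).congr_deriv ?_
  have hm2 : m - 2 ≠ 0 := by linarith
  have hm1 : m - 1 ≠ 0 := by linarith
  have hq : a * m - (a + 1) ≠ 0 := by nlinarith
  -- `(a - 1)(m - 1) = q - (m - 2)` for `q = a m - (a + 1)`, which then is a single atom
  have e : a - 1 = (a * m - (a + 1) - (m - 2)) / (m - 1) := by field_simp; ring
  rw [e]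
  generalize a * m - (a + 1) = q at hq ⊢
  field_simp
  ring

lemma sub_one_mul_lt_log_mul (ha : 1 < a) (hm : 2 < m) :
    (a - 1) * (m - 2) < log a * (a * m - (a + 1)) := by
  have ha0 : 0 < a := by linarith
  have hlog : (a - 1) / a ≤ log a := by
    simpa [sub_div, div_self ha0.ne'] using one_sub_inv_le_log_of_pos ha0
  calc (a - 1) * (m - 2) < (a - 1) / a * (a * m - (a + 1)) := by
        rw [div_mul_eq_mul_div, lt_div_iff₀ ha0]; nlinarith
    _ ≤ log a * (a * m - (a + 1)) := mul_le_mul_of_nonneg_right hlog (by nlinarith)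

lemma sub_one_div_lt_log_div_sq (ha : 1 < a) (hm : 2 < m) :
    (a - 1) / ((m - 2) * (a * m - (a + 1))) < log a / (m - 2) ^ 2 := by
  have h2 : 0 < m - 2 := by linarith
  rw [div_lt_div_iff₀ (mul_pos h2 (by nlinarith)) (by positivity)]
  nlinarith [mul_lt_mul_of_pos_right (sub_one_mul_lt_log_mul ha hm) h2]

end

theorem stmt_5 (m : ℝ) (hm : 2 < m) :
    deriv F m = -Real.log (Real.pi ^ 2 + 1) / (m - 2) ^ 2
        + Real.pi ^ 2 / ((m - 2) * ((Real.pi ^ 2 + 1) * m - (Real.pi ^ 2 + 2)))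
      ∧ deriv F m < 0 := by
  have ha : 1 < π ^ 2 + 1 := by linarith [pow_pos pi_pos 2]
  have hderiv : deriv F m = -log (π ^ 2 + 1) / (m - 2) ^ 2
      + (π ^ 2 + 1 - 1) / ((m - 2) * ((π ^ 2 + 1) * m - (π ^ 2 + 1 + 1))) := by
    rw [F_eq_paramF]; exact (hasDerivAt_paramF ha hm).deriv
  have hneg := sub_one_div_lt_log_div_sq ha hm
  rw [show π ^ 2 + 1 - 1 = π ^ 2 by ring, show π ^ 2 + 1 + 1 = π ^ 2 + 2 by ring] at hderiv hneg
  refine ⟨hderiv, ?_⟩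
  rw [hderiv, neg_div]
  linarith
end

section
/- Let m > 2, χ > 0, λ = −((m−2)/(m−1)) χ^{1/(m−2)}, and define G_λ(c) = c² − 2∫_{−λ}^{c} ((m−1)χ(z+λ))^{1/(m−1)} dz for c ∈ [−λ, 1]. Then G_λ(−λ) ≤ G_λ(c) for all c ∈ (−λ, 1). -/
/-!
With `p = 1/(m-1)` and `s = χ^{1/(m-2)}` one has `χ^p = s^{1-p}`, so by weighted AM–GM
`((m-1)χ(z+λ))^p = ((m-1)(z+λ))^p s^{1-p} ≤ (z+λ) + (m-2)/(m-1) s = z`: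
the choice of `λ` makes the line `z ↦ z` tangent to the concave integrand. Hence
`∫_{-λ}^c integrand ≤ ∫_{-λ}^c z dz = (c² - λ²)/2`, which is `G_λ(-λ) ≤ G_λ(c)`.
-/

open Set MeasureTheory intervalIntegral

lemma rpow_mul_add_le_self {m χ lam z : ℝ} (hm : 2 < m) (hχ : 0 < χ)
    (hlam : lam = -((m - 2) / (m - 1)) * χ ^ (1 / (m - 2))) (hz : -lam ≤ z) :
    ((m - 1) * χ * (z + lam)) ^ (1 / (m - 1)) ≤ z := by
  have hm1 : 0 < m - 1 := by linarith
  have hm2 : 0 < m - 2 := by linarith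
  set p := 1 / (m - 1) with hp_def
  set s := χ ^ (1 / (m - 2))
  have hp : 0 ≤ p := by positivity
  have hp1 : 0 ≤ 1 - p := by
    rw [sub_nonneg, div_le_one (by linarith)]; linarith
  have hs : 0 ≤ s := by positivity
  have hu : 0 ≤ (m - 1) * (z + lam) := mul_nonneg (by linarith) (by linarith)
  have hχs : χ ^ p = s ^ (1 - p) := by
    rw [← Real.rpow_mul hχ.le]
    congr 1
    rw [hp_def]
    field_simp
    ring
  calc ((m - 1) * χ * (z + lam)) ^ p
      = ((m - 1) * (z + lam)) ^ p * s ^ (1 - p) := by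
        rw [mul_right_comm, Real.mul_rpow hu hχ.le, hχs]
    _ ≤ p * ((m - 1) * (z + lam)) + (1 - p) * s :=
        Real.geom_mean_le_arith_mean2_weighted hp hp1 hu hs (by ring)
    _ = z := by
        rw [hlam, hp_def]
        field_simp
        ring

lemma sq_le_sq_sub_two_mul_integral {f : ℝ → ℝ} {a c : ℝ} (hac : a ≤ c)
    (hf : IntervalIntegrable f volume a c) (hfle : ∀ z ∈ Icc a c, f z ≤ z) :
    a ^ 2 ≤ c ^ 2 - 2 * ∫ z in a..c, f z := by
  have h := integral_mono_on (g := fun z => z) hac hf (continuous_id.intervalIntegrable a c) hfle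
  rw [integral_id] at h
  linarith

open intervalIntegral in
theorem stmt_11 (m χ : ℝ) (hm : 2 < m) (hχ : 0 < χ) :
    let lam : ℝ := -((m - 2) / (m - 1)) * χ ^ (1 / (m - 2))
    let G : ℝ → ℝ := fun c =>
      c ^ 2 - 2 * ∫ z in (-lam)..c, ((m - 1) * χ * (z + lam)) ^ (1 / (m - 1))
    ∀ c ∈ Set.Ioo (-lam) 1, G (-lam) ≤ G c := by
  intro lam G c hc
  have hcont : Continuous fun z : ℝ => ((m - 1) * χ * (z + lam)) ^ (1 / (m - 1)) :=
    (Real.continuous_rpow_const (one_div_nonneg.2 (by linarith))).comp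
      (by fun_prop)
  simp only [G, integral_same, mul_zero, sub_zero]
  exact sq_le_sq_sub_two_mul_integral hc.1.le (hcont.intervalIntegrable _ _)
    fun z hz => rpow_mul_add_le_self hm hχ rfl hz.1
end
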